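/- arXiv:1511.07981 — 2 statements merged into one kernel-verified Lean document; each statement's English description precedes it below -/
import Mathlib

section
/- Let X be a Polish space and let E be a coanalytic equivalence relation on X. Then there exists a family (E_α)_{α<ω₁} of Borel subsets of X × X such that: (i) whenever α ≤ β < ω₁, E_α ⊆ E_β; (ii) the graph of E equals ⋃_{α<ω₁} E_α; and (iii) there is a club set C of ordinals below ω₁ such that for every α ∈ C, E_α is the graph of an equivalence relation on X. -/
/-!
Write the complement of `E` as the range of a continuous `f` on Baire space. For `x ∉ range f`
the tree of finite sequences `s` with `x ∈ closure (f '' N_s)` is well founded (an infinite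
branch `y` would force `x = f y`), and the sets `treeRankLE f α []` of points whose tree has
rank at most `α` are Borel for `α < ω₁` and exhaust `E`. They satisfy `Σ¹₁`-boundedness: if
`range g` misses `range f`, the tree of pairs `(s, t)` with
`closure (g '' N_s) ∩ closure (f '' N_t) ≠ ∅` is well founded, and its rank bounds the ranks of
all points of `range g`. Applied to the diagonal, the inverse and the square of the `β`-th
approximation this gives `φ β < ω₁` whose approximation contains all three; at every closure
point `α` of `φ` the union of the approximations below `α` is therefore an equivalence
relation, and these closure points form a club.
-/

open MeasureTheory Set

/-- The first uncountable ordinal `ω₁`. -/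
noncomputable def omega1 : Ordinal := (Cardinal.aleph 1).ord

open Filter Topology PiNat Ordinal
open scoped SetRel

universe v

theorem omega1_eq_omega_one : omega1 = ω₁ := Cardinal.ord_aleph 1

theorem isSuccLimit_omega_one : Order.IsSuccLimit ω₁ := by
  rw [← Cardinal.ord_aleph]
  exact Cardinal.isSuccLimit_ord (Cardinal.aleph0_le_aleph 1)

theorem countable_Iio_of_lt_omega_one {α : Ordinal} (hα : α < ω₁) : (Iio α).Countable := by
  rw [← Cardinal.le_aleph0_iff_set_countable, Cardinal.mk_Iio_ordinal, Cardinal.lift_le_aleph0,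
    ← Cardinal.lt_aleph_one_iff, ← Cardinal.lt_ord, Cardinal.ord_aleph]
  exact hα

theorem Acc.rank_lt_omega_one {α : Type*} [Countable α] {r : α → α → Prop} {a : α}
    (h : Acc r a) : h.rank < ω₁ := by
  induction h with
  | intro a _ ih =>
    rw [Acc.rank_eq]
    exact iSup_lt_omega_one fun b => isSuccLimit_omega_one.succ_lt (ih b b.2)

theorem biUnion_Iio_biUnion_Iio {ι α : Type*} [LinearOrder ι] [SuccOrder ι] {o : ι}
    (ho : Order.IsSuccLimit o) (B : ι → Set α) :
    ⋃ i ∈ Iio o, ⋃ j ∈ Iio i, B j = ⋃ j ∈ Iio o, B j := by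
  ext x
  simp only [mem_iUnion, mem_Iio, exists_prop]
  exact ⟨fun ⟨i, hi, j, hj, hx⟩ => ⟨j, hj.trans hi, hx⟩,
    fun ⟨j, hj, hx⟩ => ⟨_, ho.succ_lt hj, j, Order.lt_succ_of_not_isMax hj.not_isMax, hx⟩⟩

def closurePoints (φ : Ordinal → Ordinal) : Set Ordinal := {α | 0 < α ∧ ∀ β < α, φ β < α}

theorem sSup_mem_closurePoints {φ : Ordinal → Ordinal} {S : Set Ordinal}
    (hS : S ⊆ closurePoints φ) (hne : S.Nonempty) (hbdd : BddAbove S) :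
    sSup S ∈ closurePoints φ := by
  obtain ⟨s, hs⟩ := hne
  refine ⟨(hS hs).1.trans_le (le_csSup hbdd hs), fun β hβ => ?_⟩
  obtain ⟨s', hs', hβs'⟩ := exists_lt_of_lt_csSup ⟨s, hs⟩ hβ
  exact ((hS hs').2 β hβs').trans_le (le_csSup hbdd hs')

theorem exists_mem_closurePoints_of_lt_omega_one {φ : Ordinal → Ordinal}
    (hφ : ∀ β < ω₁, φ β < ω₁) {α : Ordinal} (hα : α < ω₁) :
    ∃ γ ∈ closurePoints φ, α < γ ∧ γ < ω₁ := by
  set ψ : Ordinal → Ordinal := fun β => max β (⨆ δ : Iio β, φ δ) + 1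
  have hψ_lt : ∀ β < ω₁, ψ β < ω₁ := fun β hβ =>
    haveI := (countable_Iio_of_lt_omega_one hβ).to_subtype
    isSuccLimit_omega_one.add_one_lt <| max_lt hβ <|
      iSup_lt_omega_one fun δ => hφ δ (δ.2.trans hβ)
  have hlt_ψ : ∀ β, β < ψ β := fun β => (le_max_left _ _).trans_lt (lt_add_one _)
  have hφ_lt_ψ : ∀ β, ∀ δ < β, φ δ < ψ β := fun β δ hδ =>
    ((Ordinal.le_iSup (fun δ : Iio β => φ δ) ⟨δ, hδ⟩).trans (le_max_right _ _)).trans_lt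
      (lt_add_one _)
  have hα_lt : α < nfp ψ α := (hlt_ψ α).trans_le (iterate_le_nfp ψ α 1)
  refine ⟨nfp ψ α, ⟨pos_of_gt hα_lt, fun β hβ => ?_⟩, hα_lt, nfp_lt_ord (by simp) hψ_lt hα⟩
  obtain ⟨n, hn⟩ := lt_nfp_iff.1 hβ
  calc φ β < ψ (ψ^[n] α) := hφ_lt_ψ _ β hn
    _ = ψ^[n + 1] α := (Function.iterate_succ_apply' ψ n α).symm
    _ ≤ nfp ψ α := iterate_le_nfp ψ α (n + 1)

theorem PiNat.eventually_cylinder_subset {E : ℕ → Type*} [∀ n, TopologicalSpace (E n)]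
    [∀ n, DiscreteTopology (E n)] {z : ∀ n, E n} {s : Set (∀ n, E n)} (hs : s ∈ 𝓝 z) :
    ∀ᶠ k in atTop, cylinder z k ⊆ s := by
  obtain ⟨_, ⟨x, n, rfl⟩, hz, hs⟩ := (isTopologicalBasis_cylinders E).mem_nhds_iff.1 hs
  rw [← mem_cylinder_iff_eq.1 hz] at hs
  exact eventually_atTop.2 ⟨n, fun k hk => (cylinder_anti z hk).trans hs⟩

section

variable {P : Type*} [TopologicalSpace P]

theorem eq_of_frequently_closure_image_cylinder_inter_nonempty [T25Space P]
    {f g : (ℕ → ℕ) → P} (hf : Continuous f) (hg : Continuous g) {z w : ℕ → ℕ}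
    (h : ∃ᶠ k in atTop, (closure (g '' cylinder z k) ∩ closure (f '' cylinder w k)).Nonempty) :
    g z = f w := by
  by_contra hne
  obtain ⟨s, hs, t, ht, hst⟩ := exists_nhds_disjoint_closure hne
  obtain ⟨k, ⟨p, hpg, hpf⟩, hzk, hwk⟩ := (h.and_eventually
    ((eventually_cylinder_subset (hg.continuousAt hs)).and
      (eventually_cylinder_subset (hf.continuousAt ht)))).exists
  exact hst.ne_of_mem (closure_mono (image_subset_iff.2 hzk) hpg)
    (closure_mono (image_subset_iff.2 hwk) hpf) rfl

/-- Finite sequences are listed last entry first, as in `PiNat.res`. -/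
def listCylinder (t : List ℕ) : Set (ℕ → ℕ) := {z | res z t.length = t}

theorem mem_listCylinder_res (z : ℕ → ℕ) (n : ℕ) : z ∈ listCylinder (res z n) := by
  simp [listCylinder, res_length]

theorem listCylinder_res (z : ℕ → ℕ) (n : ℕ) : listCylinder (res z n) = cylinder z n := by
  ext y
  simp [listCylinder, cylinder_eq_res, res_length]

/-- `x ∈ treeRankLE f α t` iff the node `t` has rank at most `α` in the tree
`{s | x ∈ closure (f '' listCylinder s)}`. -/
noncomputable def treeRankLE (f : (ℕ → ℕ) → P) (α : Ordinal) (t : List ℕ) : Set P :=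
  {x | ∀ n, x ∈ closure (f '' listCylinder (n :: t)) →
    ∃ β : {β // β < α}, x ∈ treeRankLE f β (n :: t)}
termination_by α
decreasing_by exact β.2

theorem mem_treeRankLE {f : (ℕ → ℕ) → P} {α : Ordinal} {t : List ℕ} {x : P} :
    x ∈ treeRankLE f α t ↔
      ∀ n, x ∈ closure (f '' listCylinder (n :: t)) → ∃ β < α, x ∈ treeRankLE f β (n :: t) := by
  rw [treeRankLE]
  simp only [mem_ofPred_eq, Subtype.exists, exists_prop]

theorem treeRankLE_mono (f : (ℕ → ℕ) → P) (t : List ℕ) : Monotone fun α => treeRankLE f α t :=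
  fun _ _ hαα' _ hx => mem_treeRankLE.2 fun n hn =>
    let ⟨β, hβ, hxβ⟩ := mem_treeRankLE.1 hx n hn
    ⟨β, hβ.trans_le hαα', hxβ⟩

theorem measurableSet_treeRankLE [MeasurableSpace P] [OpensMeasurableSpace P]
    (f : (ℕ → ℕ) → P) {α : Ordinal} (hα : α < ω₁) (t : List ℕ) :
    MeasurableSet (treeRankLE f α t) := by
  induction α using WellFoundedLT.induction generalizing t with
  | _ α ih =>
    have : treeRankLE f α t = ⋂ n, (closure (f '' listCylinder (n :: t)))ᶜ ∪
        ⋃ β ∈ Iio α, treeRankLE f β (n :: t) := by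
      ext x
      rw [mem_treeRankLE]
      simp only [mem_iInter, mem_union, mem_compl_iff, mem_iUnion, mem_Iio, exists_prop,
        imp_iff_not_or]
    rw [this]
    exact .iInter fun n => isClosed_closure.measurableSet.compl.union <|
      .biUnion (countable_Iio_of_lt_omega_one hα) fun β hβ => ih β hβ (lt_trans hβ hα) _

theorem apply_notMem_treeRankLE (f : (ℕ → ℕ) → P) (y : ℕ → ℕ) (α : Ordinal) (n : ℕ) :
    f y ∉ treeRankLE f α (res y n) := by
  induction α using WellFoundedLT.induction generalizing n with
  | _ α ih =>
    intro hy
    obtain ⟨β, hβ, hyβ⟩ := mem_treeRankLE.1 hy (y n)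
      (subset_closure (mem_image_of_mem f (mem_listCylinder_res y (n + 1))))
    exact ih β hβ (n + 1) hyβ

theorem treeRankLE_nil_subset_compl_range (f : (ℕ → ℕ) → P) (α : Ordinal) :
    treeRankLE f α [] ⊆ (range f)ᶜ := by
  rintro _ hx ⟨y, rfl⟩
  exact apply_notMem_treeRankLE f y α 0 hx

def jointTreeRel (f g : (ℕ → ℕ) → P) (q p : List ℕ × List ℕ) : Prop :=
  (∃ m, q.1 = m :: p.1) ∧ (∃ n, q.2 = n :: p.2) ∧
    (closure (g '' listCylinder q.1) ∩ closure (f '' listCylinder q.2)).Nonempty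

theorem acc_jointTreeRel_nil [T25Space P] {f g : (ℕ → ℕ) → P} (hf : Continuous f)
    (hg : Continuous g) (hfg : Disjoint (range g) (range f)) :
    Acc (jointTreeRel f g) ([], []) := by
  by_contra hacc
  obtain ⟨c, hc0, hc⟩ := not_acc_iff_exists_descending_chain.1 hacc
  choose z hz using fun k => (hc k).1
  choose w hw using fun k => (hc k).2.1
  have hres : ∀ k, c k = (res z k, res w k) := by
    intro k
    induction k with
    | zero => exact hc0
    | succ k ih => rw [Prod.ext_iff, hz, hw, ih]; exact ⟨rfl, rfl⟩
  refine hfg.ne_of_mem (mem_range_self z) (mem_range_self w)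
    (eq_of_frequently_closure_image_cylinder_inter_nonempty hf hg ?_)
  refine frequently_atTop.2 fun k => ⟨k + 1, k.le_succ, ?_⟩
  simpa only [hres, listCylinder_res] using (hc k).2.2

theorem mem_treeRankLE_lift_rank {f g : (ℕ → ℕ) → P} {p : List ℕ × List ℕ}
    (hp : Acc (jointTreeRel f g) p) {z : ℕ → ℕ} (hz : z ∈ listCylinder p.1) :
    g z ∈ treeRankLE f (lift.{v} hp.rank) p.2 := by
  induction hp generalizing z with
  | intro p hacc ih =>
    refine mem_treeRankLE.2 fun n hn => ?_
    have hzq : z ∈ listCylinder (z p.1.length :: p.1) :=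
      show res z (p.1.length + 1) = _ by rw [res_succ, hz]
    have hq : jointTreeRel f g (z p.1.length :: p.1, n :: p.2) p :=
      ⟨⟨_, rfl⟩, ⟨n, rfl⟩, g z, subset_closure (mem_image_of_mem g hzq), hn⟩
    exact ⟨_, lift_lt.2 (Acc.rank_lt_of_rel _ hq), ih _ hq hzq⟩

theorem exists_range_subset_treeRankLE [T25Space P] {f g : (ℕ → ℕ) → P} (hf : Continuous f)
    (hg : Continuous g) (hfg : Disjoint (range g) (range f)) :
    ∃ ρ < ω₁, range g ⊆ treeRankLE f (ρ : Ordinal.{v}) [] := by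
  have hacc := acc_jointTreeRel_nil hf hg hfg
  refine ⟨lift.{v} hacc.rank, lift_lt_omega_one.2 hacc.rank_lt_omega_one, ?_⟩
  rintro _ ⟨z, rfl⟩
  exact mem_treeRankLE_lift_rank hacc rfl

theorem MeasureTheory.analyticSet_singleton (x : P) : AnalyticSet {x} := by
  simpa only [range_const] using
    analyticSet_range_of_polishSpace (continuous_const : Continuous fun _ : Unit => x)

theorem MeasureTheory.AnalyticSet.union {s t : Set P} (hs : AnalyticSet s) (ht : AnalyticSet t) :
    AnalyticSet (s ∪ t) := by
  rw [union_eq_iUnion]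
  exact .iUnion fun b => by cases b <;> assumption

structure IsBoundedBorelExhaustion [MeasurableSpace P] (C : Set P) (B : Ordinal → Set P) :
    Prop where
  measurableSet : ∀ α < ω₁, MeasurableSet (B α)
  monotone : Monotone B
  subset : ∀ α, B α ⊆ C
  bounded : ∀ S, AnalyticSet S → S ⊆ C → ∃ ρ < ω₁, S ⊆ B ρ

theorem IsBoundedBorelExhaustion.biUnion_Iio_omega_one_eq [MeasurableSpace P] {C : Set P}
    {B : Ordinal → Set P} (hB : IsBoundedBorelExhaustion C B) : ⋃ α ∈ Iio ω₁, B α = C := by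
  refine (iUnion₂_subset fun α _ => hB.subset α).antisymm fun x hx => ?_
  obtain ⟨ρ, hρ, hxρ⟩ := hB.bounded {x} (analyticSet_singleton x) (singleton_subset_iff.2 hx)
  exact mem_biUnion hρ (hxρ rfl)

theorem MeasureTheory.AnalyticSet.exists_isBoundedBorelExhaustion_compl [T25Space P]
    [MeasurableSpace P] [OpensMeasurableSpace P] {A : Set P} (hA : AnalyticSet A) :
    ∃ B : Ordinal.{v} → Set P, IsBoundedBorelExhaustion Aᶜ B := by
  rw [AnalyticSet] at hA
  rcases hA with rfl | ⟨f, hf, rfl⟩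
  · exact ⟨fun _ => univ, fun _ _ => .univ, monotone_const, fun _ => by rw [compl_empty],
      fun S _ _ => ⟨0, omega_pos 1, subset_univ S⟩⟩
  refine ⟨fun α => treeRankLE f α [], fun α hα => measurableSet_treeRankLE f hα [],
    treeRankLE_mono f [], treeRankLE_nil_subset_compl_range f, fun S hS hSf => ?_⟩
  rw [AnalyticSet] at hS
  rcases hS with rfl | ⟨g, hg, rfl⟩
  · exact ⟨0, omega_pos 1, empty_subset _⟩
  · exact exists_range_subset_treeRankLE hf hg (subset_compl_iff_disjoint_right.1 hSf)

end

section Polish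

variable {X Y Z : Type*} [TopologicalSpace X] [PolishSpace X] [MeasurableSpace X] [BorelSpace X]
  [TopologicalSpace Y] [PolishSpace Y] [MeasurableSpace Y] [BorelSpace Y]
  [TopologicalSpace Z] [PolishSpace Z] [MeasurableSpace Z] [BorelSpace Z]

theorem MeasureTheory.analyticSet_comp {R : SetRel X Y} {S : SetRel Y Z} (hR : MeasurableSet R)
    (hS : MeasurableSet S) : AnalyticSet (R ○ S) := by
  have hRS : MeasurableSet {q : X × Y × Z | (q.1, q.2.1) ∈ R ∧ (q.2.1, q.2.2) ∈ S} :=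
    (hR.preimage (by fun_prop)).inter (hS.preimage (by fun_prop))
  convert hRS.analyticSet.image_of_continuous (f := fun q => (q.1, q.2.2)) (by fun_prop)
  ext ⟨x, z⟩
  simp [SetRel.comp]

theorem IsBoundedBorelExhaustion.exists_id_union_inv_union_comp_subset {E : X → X → Prop}
    (hE : Equivalence E) {B : Ordinal → SetRel X X}
    (hB : IsBoundedBorelExhaustion {p | E p.1 p.2} B) {β : Ordinal} (hβ : β < ω₁) :
    ∃ γ < ω₁, SetRel.id ∪ (B β).inv ∪ (B β ○ B β) ⊆ B γ := by
  have hBβ := hB.measurableSet β hβ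
  have hid : MeasurableSet (SetRel.id : SetRel X X) := isClosed_diagonal.measurableSet
  have hinv : MeasurableSet (B β).inv := hBβ.preimage measurable_swap
  refine hB.bounded _ ((hid.union hinv).analyticSet.union (analyticSet_comp hBβ hBβ)) ?_
  rintro ⟨x, y⟩ ((hxy | hxy) | hxy)
  · exact SetRel.mem_id.1 hxy ▸ hE.refl x
  · exact hE.symm (hB.subset β hxy)
  · obtain ⟨z, hxz, hzy⟩ := SetRel.mem_comp.1 hxy
    exact hE.trans (hB.subset β hxz : E x z) (hB.subset β hzy)

end Polish

theorem equivalence_biUnion_Iio {X : Type*} {B : Ordinal → SetRel X X} (hB : Monotone B)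
    {φ : Ordinal → Ordinal} {α : Ordinal} (hα : α ∈ closurePoints φ)
    (hφ : ∀ β < α, SetRel.id ∪ (B β).inv ∪ (B β ○ B β) ⊆ B (φ β)) :
    Equivalence fun x y => (x, y) ∈ ⋃ β ∈ Iio α, B β := by
  have hmem : ∀ {β x y}, β < α → (x, y) ∈ SetRel.id ∪ (B β).inv ∪ (B β ○ B β) →
      (x, y) ∈ ⋃ β ∈ Iio α, B β :=
    fun hβ h => mem_biUnion (hα.2 _ hβ) (hφ _ hβ h)
  refine ⟨fun x => hmem hα.1 (mem_union_left _ (mem_union_left _ rfl)), fun hxy => ?_,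
    fun hxy hyz => ?_⟩
  · obtain ⟨β, hβ, h⟩ := mem_iUnion₂.1 hxy
    exact hmem hβ (mem_union_left _ (mem_union_right _ h))
  · obtain ⟨β₁, hβ₁, h₁⟩ := mem_iUnion₂.1 hxy
    obtain ⟨β₂, hβ₂, h₂⟩ := mem_iUnion₂.1 hyz
    exact hmem (max_lt hβ₁ hβ₂)
      (mem_union_right _ ⟨_, hB (le_max_left _ _) h₁, hB (le_max_right _ _) h₂⟩)

/-- A coanalytic equivalence relation on a Polish space is the union of an
increasing `ω₁`-sequence of Borel sets which are equivalence relations on a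
club of indices. -/
theorem coanalytic_equivalence_increasing_borel_approximations
    {X : Type*} [TopologicalSpace X] [PolishSpace X]
    [MeasurableSpace X] [BorelSpace X]
    (E : X → X → Prop) (hE : Equivalence E)
    (hEcoan : AnalyticSet ({p : X × X | E p.1 p.2}ᶜ)) :
    ∃ Eseq : Ordinal → Set (X × X),
      (∀ α < omega1, MeasurableSet (Eseq α)) ∧
      (∀ α β : Ordinal, α ≤ β → β < omega1 → Eseq α ⊆ Eseq β) ∧
      ({p : X × X | E p.1 p.2} = ⋃ α ∈ Iio omega1, Eseq α) ∧
      ∃ C : Set Ordinal, C ⊆ Iio omega1 ∧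
        (∀ α < omega1, ∃ β ∈ C, α ≤ β) ∧
        (∀ S : Set Ordinal, S ⊆ C → S.Nonempty →
          (∃ β < omega1, ∀ s ∈ S, s ≤ β) → sSup S ∈ C) ∧
        (∀ α ∈ C, Equivalence (fun x y : X => (x, y) ∈ Eseq α)) := by
  rw [omega1_eq_omega_one]
  obtain ⟨B, hB⟩ := hEcoan.exists_isBoundedBorelExhaustion_compl
  rw [compl_compl] at hB
  choose! φ hφω hφ using fun β (hβ : β < ω₁) =>
    hB.exists_id_union_inv_union_comp_subset hE hβ
  refine ⟨fun α => ⋃ β ∈ Iio α, B β,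
    fun α hα => .biUnion (countable_Iio_of_lt_omega_one hα) fun β hβ =>
      hB.measurableSet β (lt_trans hβ hα),
    fun α β hαβ _ => biUnion_subset_biUnion_left (Iio_subset_Iio hαβ), ?_,
    Iio ω₁ ∩ closurePoints φ, inter_subset_left, fun α hα => ?_, ?_, ?_⟩
  · rw [biUnion_Iio_biUnion_Iio isSuccLimit_omega_one, hB.biUnion_Iio_omega_one_eq]
  · obtain ⟨γ, hγ, hαγ, hγω⟩ := exists_mem_closurePoints_of_lt_omega_one hφω hα
    exact ⟨γ, ⟨hγω, hγ⟩, hαγ.le⟩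
  · rintro S hS hne ⟨β, hβ, hSβ⟩
    exact ⟨(csSup_le hne hSβ).trans_lt hβ,
      sSup_mem_closurePoints (hS.trans inter_subset_right) hne ⟨β, hSβ⟩⟩
  · rintro α ⟨hαω, hα⟩
    exact equivalence_biUnion_Iio hB.monotone hα fun β hβ => hφ β (hβ.trans hαω)
end

section
/- Let X be a Polish space and let E be an equivalence relation on X (no definability assumption on E) which is thin and all of whose equivalence classes are countable. Then every Borel set C ⊆ X such that E ∩ (C × C) is a Borel subset of X × X is countable. (Consequently, for any σ-ideal on X containing all singletons, there is no I-positive Borel set on which E restricts to a Borel equivalence relation.) -/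
/-!
If `C` were uncountable it would contain a continuous injective image `f` of Cantor space.
Pulled back along `f`, the relation `E ∩ C × C` becomes a Borel relation on Cantor space whose
vertical sections are countable, hence meagre, so it is meagre by the Kuratowski–Ulam theorem.
Mycielski's theorem then gives a continuous `g` sending distinct points to unrelated points, and
the range of `f ∘ g` is a nonempty perfect set of pairwise `E`-inequivalent points, contradicting
thinness.
-/

open MeasureTheory Set Filter Topology PiNat

instance Pi.perfectSpace {ι : Type*} [Infinite ι] {π : ι → Type*} [∀ i, TopologicalSpace (π i)]
    [∀ i, Nontrivial (π i)] : PerfectSpace (∀ i, π i) := by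
  classical
  refine ⟨preperfect_iff_nhds.2 fun x _ U hU => ?_⟩
  rw [nhds_pi, Filter.mem_pi] at hU
  obtain ⟨I, hI, t, ht, htU⟩ := hU
  obtain ⟨i, hi⟩ := hI.infinite_compl.nonempty
  obtain ⟨a, ha⟩ := exists_ne (x i)
  refine ⟨Function.update x i a, ⟨htU fun j hj => ?_, trivial⟩,
    fun h => ha (by simpa using congrFun h i)⟩
  rw [Function.update_of_ne (ne_of_mem_of_not_mem hj hi)]
  exact mem_of_mem_nhds (ht j)

theorem Set.Countable.isMeagre {X : Type*} [TopologicalSpace X] [T1Space X] [PerfectSpace X]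
    {s : Set X} (hs : s.Countable) : IsMeagre s := by
  rw [← biUnion_of_singleton s]
  exact isMeagre_biUnion hs fun x _ => IsNowhereDense.isMeagre <|
    isClosed_singleton.isNowhereDense_iff.2 <|
      interior_eq_empty_iff_dense_compl.2 <| dense_compl_singleton x

theorem Continuous.perfect_range {α β : Type*} [TopologicalSpace α] [CompactSpace α]
    [PerfectSpace α] [TopologicalSpace β] [T2Space β] {f : α → β} (hf : Continuous f)
    (hinj : Function.Injective f) : Perfect (range f) := by
  refine ⟨(isCompact_range hf).isClosed, ?_⟩
  rintro _ ⟨a, rfl⟩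
  simpa [map_principal] using (PerfectSpace.univ_preperfect a trivial).map hf.continuousAt hinj

theorem IsMeagre.exists_isClosed_isNowhereDense_cover {X : Type*} [TopologicalSpace X]
    {s : Set X} (hs : IsMeagre s) :
    ∃ K : ℕ → Set X, (∀ i, IsClosed (K i) ∧ IsNowhereDense (K i)) ∧ s ⊆ ⋃ i, K i := by
  obtain ⟨S, hS, hSc, hsS⟩ := isMeagre_iff_countable_union_isNowhereDense.1 hs
  obtain ⟨e, he⟩ := (hSc.insert ∅).exists_eq_range (insert_nonempty _ _)
  refine ⟨fun i => closure (e i), fun i => ⟨isClosed_closure, ?_⟩, ?_⟩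
  · rcases (he ▸ mem_range_self i : e i ∈ insert ∅ S) with h | h
    · simp [h]
    · exact (hS _ h).closure
  · refine hsS.trans (sUnion_subset fun t ht => ?_)
    obtain ⟨i, rfl⟩ : t ∈ range e := he ▸ mem_insert_of_mem _ ht
    exact subset_closure.trans (subset_iUnion (fun i => closure (e i)) i)

section KuratowskiUlam

variable {α β : Type*} [TopologicalSpace α] [TopologicalSpace β] [SecondCountableTopology β]

theorem IsClosed.eventually_isNowhereDense_slice {K : Set (α × β)} (hKc : IsClosed K)
    (hK : IsNowhereDense K) : ∀ᶠ x in residual α, IsNowhereDense {y | (x, y) ∈ K} := by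
  open TopologicalSpace in
  have hS : ∀ V ∈ countableBasis β, IsClosed {x | ∀ y ∈ V, (x, y) ∈ K} ∧
      IsNowhereDense {x | ∀ y ∈ V, (x, y) ∈ K} := by
    intro V hV
    have hclosed : IsClosed {x | ∀ y ∈ V, (x, y) ∈ K} := by
      simp only [ofPred_forall]
      exact isClosed_biInter fun y _ => hKc.preimage (Continuous.prodMk_left y)
    refine ⟨hclosed, hclosed.isNowhereDense_iff.2 ?_⟩
    have : interior {x | ∀ y ∈ V, (x, y) ∈ K} ×ˢ V ⊆ interior K :=
      (isOpen_interior.prod (isOpen_of_mem_countableBasis hV)).subset_interior_iff.2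
        fun p hp => interior_subset hp.1 p.2 hp.2
    rw [hKc.isNowhereDense_iff.1 hK, subset_empty_iff, prod_eq_empty_iff] at this
    exact this.resolve_right (nonempty_of_mem_countableBasis hV).ne_empty
  have hev : ∀ᶠ x in residual α, ∀ V ∈ countableBasis β, x ∉ {x | ∀ y ∈ V, (x, y) ∈ K} :=
    (eventually_countable_ball (countable_countableBasis β)).2 fun V hV =>
      residual_of_dense_open (isClosed_isNowhereDense_iff_compl.1 (hS V hV)).1
        (isClosed_isNowhereDense_iff_compl.1 (hS V hV)).2
  filter_upwards [hev] with x hx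
  refine (hKc.preimage (Continuous.prodMk_right x)).isNowhereDense_iff.2 ?_
  rw [← not_nonempty_iff_eq_empty]
  rintro ⟨y, hy⟩
  obtain ⟨V, hV, -, hVK⟩ :=
    (isBasis_countableBasis β).exists_subset_of_mem_open hy isOpen_interior
  exact hx V hV fun z hz => interior_subset (s := Prod.mk x ⁻¹' K) (hVK hz)

theorem IsMeagre.eventually_isMeagre_slice {M : Set (α × β)} (hM : IsMeagre M) :
    ∀ᶠ x in residual α, IsMeagre {y | (x, y) ∈ M} := by
  obtain ⟨S, hS, hSc, hMS⟩ := isMeagre_iff_countable_union_isNowhereDense.1 hM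
  filter_upwards [(eventually_countable_ball hSc).2 fun t ht =>
    isClosed_closure.eventually_isNowhereDense_slice (hS t ht).closure] with x hx
  refine (isMeagre_biUnion hSc fun t ht => (hx t ht).isMeagre).mono fun y hy => ?_
  obtain ⟨t, ht, hyt⟩ := hMS hy
  exact mem_biUnion ht (subset_closure hyt)

theorem BaireMeasurableSet.isMeagre_of_forall_isMeagre_slice [BaireSpace β] {s : Set (α × β)}
    (hs : BaireMeasurableSet s) (hslice : ∀ x, IsMeagre {y | (x, y) ∈ s}) : IsMeagre s := by
  obtain ⟨u, hu, hsu⟩ := hs.residualEq_isOpen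
  set M := {p | ¬(p ∈ s ↔ p ∈ u)}
  have hM : IsMeagre M := (eventuallyEq_set.1 hsu).mono fun _ hp hM => hM hp
  have hfst : IsMeagre (Prod.fst ⁻¹' {x | ¬IsMeagre {y | (x, y) ∈ M}}) :=
    IsMeagre.preimage_of_isOpenMap (f := @Prod.fst α β) continuous_fst isOpenMap_fst
      (hM.eventually_isMeagre_slice.mono fun _ hx h => h hx)
  refine (hfst.union hM).mono fun p hp => ?_
  by_cases hpu : p ∈ u
  · -- the slice of `u` through `p` is open and nonempty, hence not meagre
    refine Or.inl fun hMp => not_isMeagre_of_isOpen (hu.preimage (Continuous.prodMk_right p.1))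
      ⟨p.2, hpu⟩ (((hslice p.1).union hMp).mono fun y hy => ?_)
    by_cases hys : (p.1, y) ∈ s
    exacts [Or.inl hys, Or.inr fun h => hys (h.2 hy)]
  · exact Or.inr fun h => hpu (h.1 hp)

end KuratowskiUlam

theorem PiNat.exists_cylinder_subset {E : ℕ → Type*} [∀ n, TopologicalSpace (E n)]
    [∀ n, DiscreteTopology (E n)] {x : ∀ n, E n} {U : Set (∀ n, E n)} (hU : U ∈ 𝓝 x) :
    ∃ n, cylinder x n ⊆ U := by
  obtain ⟨_, ⟨y, n, rfl⟩, hx, hyU⟩ := (isTopologicalBasis_cylinders E).mem_nhds_iff.1 hU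
  exact ⟨n, by rwa [mem_cylinder_iff_eq.1 hx]⟩

theorem PiNat.exists_pi_cylinder_subset {ι : Type*} [Finite ι] {E : ℕ → Type*}
    [∀ n, TopologicalSpace (E n)] [∀ n, DiscreteTopology (E n)] {O : Set (ι → ∀ n, E n)}
    (hO : IsOpen O) {w : ι → ∀ n, E n} (hw : w ∈ O) :
    ∃ n, univ.pi (fun s => cylinder (w s) n) ⊆ O := by
  obtain ⟨u, hu, huO⟩ := isOpen_pi_iff'.1 hO w hw
  choose n hn using fun s => exists_cylinder_subset ((hu s).1.mem_nhds (hu s).2)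
  obtain ⟨N, hN⟩ := (finite_range n).bddAbove
  exact ⟨N, (pi_mono fun s _ => (cylinder_anti _ (hN (mem_range_self s))).trans (hn s)).trans huO⟩

theorem image_pair_univ_pi {ι Y : Type*} {s t : ι} (hst : s ≠ t) {V : ι → Set Y}
    (hV : ∀ i, (V i).Nonempty) : (fun w : ι → Y => (w s, w t)) '' univ.pi V = V s ×ˢ V t := by
  classical
  refine Subset.antisymm (image_subset_iff.2 fun w hw => ⟨hw s trivial, hw t trivial⟩) ?_
  rintro ⟨a, b⟩ ⟨ha, hb⟩
  choose w hw using hV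
  refine ⟨Function.update (Function.update w s a) t b, fun i _ => ?_,
    by simp [Function.update_of_ne hst]⟩
  rcases eq_or_ne i t with rfl | hit
  · simpa
  rcases eq_or_ne i s with rfl | his
  · simpa [hit]
  simpa [his, hit] using hw i

theorem isOpenMap_pair_apply {ι Y : Type*} [TopologicalSpace Y] [Finite ι] {s t : ι}
    (hst : s ≠ t) : IsOpenMap fun w : ι → Y => (w s, w t) := by
  intro O hO
  rw [isOpen_iff_forall_mem_open]
  rintro _ ⟨w, hw, rfl⟩
  obtain ⟨u, hu, huO⟩ := isOpen_pi_iff'.1 hO w hw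
  refine ⟨u s ×ˢ u t, ?_, (hu s).1.prod (hu t).1, (hu s).2, (hu t).2⟩
  rw [← image_pair_univ_pi hst fun i => ⟨w i, (hu i).2⟩]
  exact image_mono huO

namespace Mycielski

variable {K : ℕ → Set ((ℕ → Bool) × (ℕ → Bool))}

theorem exists_cylinders_disjoint {ι : Type*} [Finite ι]
    (hK : ∀ i, IsClosed (K i) ∧ IsNowhereDense (K i)) (n : ℕ) (z : ι → ℕ → Bool) (m : ℕ) :
    ∃ z' : ι → ℕ → Bool, ∃ m' > m, (∀ s, z' s ∈ cylinder (z s) m) ∧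
      ∀ s t, s ≠ t → ∀ i ≤ n, Disjoint (cylinder (z' s) m' ×ˢ cylinder (z' t) m') (K i) := by
  have hKc i := isClosed_isNowhereDense_iff_compl.1 (hK i)
  set D : {p : ι × ι // p.1 ≠ p.2} × Fin (n + 1) → Set (ι → ℕ → Bool) :=
    fun q => (fun w => (w q.1.1.1, w q.1.1.2)) ⁻¹' (K q.2)ᶜ
  have hDo q : IsOpen (D q) := (hKc q.2).1.preimage (by fun_prop)
  -- the tuples avoiding all the `K i` form a dense set by Baire's theorem in `ι → ℕ → Bool`
  have hDd : Dense (⋂ q, D q) :=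
    dense_iInter_of_isOpen hDo fun q => (hKc q.2).2.preimage (isOpenMap_pair_apply q.1.2)
  have hB : IsOpen (univ.pi fun s => cylinder (z s) m) :=
    isOpen_set_pi finite_univ fun s _ => isOpen_cylinder _ _ _
  obtain ⟨w, hwB, hwD⟩ :=
    hDd.inter_open_nonempty _ hB ⟨z, fun s _ => self_mem_cylinder _ _⟩
  obtain ⟨N, hN⟩ :=
    exists_pi_cylinder_subset (hB.inter (isOpen_iInter_of_finite hDo)) ⟨hwB, hwD⟩
  refine ⟨w, max N (m + 1), by omega, fun s => hwB s trivial, fun s t hst i hi => ?_⟩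
  rw [← subset_compl_iff_disjoint_right,
    ← image_pair_univ_pi hst fun r => ⟨w r, self_mem_cylinder _ _⟩, image_subset_iff]
  intro w' hw'
  exact mem_iInter.1 (hN (pi_mono (fun r _ => cylinder_anti _ (le_max_left _ _)) hw')).2
    ⟨⟨(s, t), hst⟩, ⟨i, Nat.lt_succ_of_le hi⟩⟩

/-- Stage `n` assigns to each `s : Fin n → Bool` the cylinder of length `(stage hK n).2`
around `(stage hK n).1 s`. -/
noncomputable def stage (hK : ∀ i, IsClosed (K i) ∧ IsNowhereDense (K i)) :
    (n : ℕ) → ((Fin n → Bool) → ℕ → Bool) × ℕ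
  | 0 => (fun _ _ => false, 0)
  | n + 1 =>
    let h := exists_cylinders_disjoint hK n (fun s => (stage hK n).1 (Fin.init s)) (stage hK n).2
    (h.choose, h.choose_spec.choose)

theorem exists_scheme (hK : ∀ i, IsClosed (K i) ∧ IsNowhereDense (K i)) :
    ∃ (z : (n : ℕ) → (Fin n → Bool) → ℕ → Bool) (m : ℕ → ℕ), StrictMono m ∧
      (∀ n s, z (n + 1) s ∈ cylinder (z n (Fin.init s)) (m n)) ∧
      ∀ n s t, s ≠ t → ∀ i ≤ n, Disjoint
        (cylinder (z (n + 1) s) (m (n + 1)) ×ˢ cylinder (z (n + 1) t) (m (n + 1))) (K i) := by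
  have spec n := (exists_cylinders_disjoint hK n
    (fun s : Fin (n + 1) → Bool => (stage hK n).1 (Fin.init s))
    (stage hK n).2).choose_spec.choose_spec
  exact ⟨fun n => (stage hK n).1, fun n => (stage hK n).2,
    strictMono_nat_of_lt_succ fun n => (spec n).1, fun n => (spec n).2.1, fun n => (spec n).2.2⟩

/-- The `k`-th coordinate is read off at stage `k + 1`, where it is already frozen since
`k < m (k + 1)`. -/
def limit (z : (n : ℕ) → (Fin n → Bool) → ℕ → Bool) (x : ℕ → Bool) : ℕ → Bool :=
  fun k => z (k + 1) (fun i => x i) k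

theorem continuous_limit (z : (n : ℕ) → (Fin n → Bool) → ℕ → Bool) : Continuous (limit z) :=
  continuous_pi fun k =>
    (continuous_of_discreteTopology (f := fun s : Fin (k + 1) → Bool => z (k + 1) s k)).comp
      (continuous_pi fun i : Fin (k + 1) => continuous_apply (i : ℕ))

variable {z : (n : ℕ) → (Fin n → Bool) → ℕ → Bool} {m : ℕ → ℕ} (hm : StrictMono m)
  (hz : ∀ n s, z (n + 1) s ∈ cylinder (z n (Fin.init s)) (m n))
include hm hz

theorem mem_cylinder_of_le (x : ℕ → Bool) {n n' : ℕ} (h : n ≤ n') :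
    z n' (fun i => x i) ∈ cylinder (z n fun i => x i) (m n) := by
  induction n', h using Nat.le_induction with
  | base => exact self_mem_cylinder _ _
  | succ n' hnn' ih =>
    exact fun i hi => (hz n' (fun i => x i) i (hi.trans_le (hm.monotone hnn'))).trans (ih i hi)

theorem limit_mem_cylinder (x : ℕ → Bool) (n : ℕ) :
    limit z x ∈ cylinder (z n fun i => x i) (m n) := by
  intro k hk
  rcases le_total (k + 1) n with h | h
  · exact (mem_cylinder_of_le hm hz x h k ((Nat.lt_succ_self k).trans_le (hm.id_le _))).symm
  · exact mem_cylinder_of_le hm hz x h k hk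

end Mycielski

open Mycielski in
theorem IsMeagre.exists_continuous_forall_ne_notMem {F : Set ((ℕ → Bool) × (ℕ → Bool))}
    (hF : IsMeagre F) : ∃ g : (ℕ → Bool) → ℕ → Bool, Continuous g ∧
      ∀ x y, x ≠ y → (g x, g y) ∉ F := by
  obtain ⟨K, hK, hFK⟩ := hF.exists_isClosed_isNowhereDense_cover
  obtain ⟨z, m, hm, hz, hdisj⟩ := exists_scheme hK
  refine ⟨limit z, continuous_limit z, fun x y hxy hxyF => ?_⟩
  obtain ⟨i, hi⟩ := mem_iUnion.1 (hFK hxyF)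
  obtain ⟨j, hj⟩ := Function.ne_iff.1 hxy
  have hxyn : (fun k : Fin (max i j + 1) => x k) ≠ fun k : Fin (max i j + 1) => y k :=
    fun h => hj (congrFun h ⟨j, by omega⟩)
  exact (hdisj _ _ _ hxyn i (le_max_left _ _)).ne_of_mem
    ⟨limit_mem_cylinder hm hz x _, limit_mem_cylinder hm hz y _⟩ hi rfl

theorem MeasurableSet.exists_nat_bool_injection_of_not_countable {X : Type*}
    [TopologicalSpace X] [PolishSpace X] [MeasurableSpace X] [BorelSpace X] {C : Set X}
    (hC : MeasurableSet C) (hunc : ¬C.Countable) :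
    ∃ f : (ℕ → Bool) → X, range f ⊆ C ∧ Continuous f ∧ Function.Injective f := by
  obtain ⟨t, hle, hpol, hclosed, -⟩ := hC.isClopenable
  obtain ⟨f, hfC, hf, hinj⟩ :=
    @IsClosed.exists_nat_bool_injection_of_not_countable X t hpol C hclosed hunc
  exact ⟨f, hfC, continuous_le_rng hle hf, hinj⟩

theorem MeasurableSet.exists_perfect_subset_pairwise_notMem {X : Type*} [TopologicalSpace X]
    [PolishSpace X] [MeasurableSpace X] [BorelSpace X] {C : Set X} (hC : MeasurableSet C)
    (hunc : ¬C.Countable) {R : Set (X × X)} (hR : MeasurableSet R)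
    (hRc : ∀ x, {y | (x, y) ∈ R}.Countable) :
    ∃ P ⊆ C, Perfect P ∧ P.Nonempty ∧ P.Pairwise fun x y => (x, y) ∉ R := by
  obtain ⟨f, hfC, hf, hinj⟩ := hC.exists_nat_bool_injection_of_not_countable hunc
  -- adding the diagonal makes the map given by Mycielski's theorem injective
  set F := Prod.map f f ⁻¹' R ∪ diagonal (ℕ → Bool)
  have hF : IsMeagre F := by
    refine (((hf.measurable.prodMap hf.measurable) hR).union measurableSet_diagonal)
      |>.baireMeasurableSet.isMeagre_of_forall_isMeagre_slice fun a => Set.Countable.isMeagre ?_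
    refine (((hRc (f a)).preimage hinj).union (countable_singleton a)).mono fun b hb => ?_
    rcases hb with hb | hb
    exacts [Or.inl hb, Or.inr hb.symm]
  obtain ⟨g, hg, hgF⟩ := hF.exists_continuous_forall_ne_notMem
  have hfg : Function.Injective (f ∘ g) := fun a b hab =>
    by_contra fun hne => hgF a b hne (Or.inr (hinj hab))
  refine ⟨range (f ∘ g), (range_comp_subset_range g f).trans hfC, (hf.comp hg).perfect_range hfg,
    range_nonempty _, ?_⟩
  rintro _ ⟨a, rfl⟩ _ ⟨b, rfl⟩ hne hab
  exact hgF a b (fun h => hne (h ▸ rfl)) (Or.inl hab)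

/-- A thin equivalence relation with all classes countable is not Borel on any
uncountable Borel set: every Borel set `C` on which `E` restricts to a Borel
relation is countable. -/
theorem thin_countable_classes_equivalence_borel_restriction_countable
    {X : Type*} [TopologicalSpace X] [PolishSpace X]
    [MeasurableSpace X] [BorelSpace X]
    (E : X → X → Prop) (hE : Equivalence E)
    (hthin : ¬ ∃ P : Set X, Perfect P ∧ P.Nonempty ∧
      P.Pairwise fun x y => ¬ E x y)
    (hcount : ∀ x : X, {y : X | E y x}.Countable) :
    ∀ C : Set X, MeasurableSet C →
      MeasurableSet ({p : X × X | E p.1 p.2} ∩ C ×ˢ C) → C.Countable := by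
  intro C hC hEC
  by_contra hunc
  obtain ⟨P, hPC, hP, hPne, hPE⟩ := hC.exists_perfect_subset_pairwise_notMem hunc hEC
    fun x => (hcount x).mono fun y hy => hE.symm hy.1
  exact hthin ⟨P, hP, hPne, fun x hx y hy hxy hExy => hPE hx hy hxy ⟨hExy, hPC hx, hPC hy⟩⟩
end
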